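/- arXiv:math/9906040 — 4 statements merged into one kernel-verified Lean document; each statement's English description precedes it below -/
import Mathlib

section
/- Let V be a finite-dimensional real vector space, r₁, r₂ : V* → V linear with ψ(r₂(φ)) = φ(r₁(ψ)) for all φ, ψ ∈ V*, S = r₁ + r₂ bijective, and λ, μ ∈ ℝ with λ + 1 + 2μ ≠ 0. Set E' = (λ+1)r₂ + μS, T' = −(λ+1)r₁ − μS, 𝓔₊ = {(E'φ, φ)}, 𝓔₋ = {(T'φ, φ)}, so that V × V* = 𝓔₊ ⊕ 𝓔₋; let π₊, π₋ be the projections onto 𝓔₊ along 𝓔₋ and onto 𝓔₋ along 𝓔₊. With B((ξ,φ),(η,ψ)) = φ(η) + ψ(ξ) and K(η,ζ) = (S⁻¹η)(ζ) for η, ζ ∈ V, the following hold for all ξ ∈ V, φ ∈ V*: B((π₊−π₋)(ξ,0),(ξ,0)) = (2/(λ+1+2μ))·K(ξ,ξ) and B((π₊−π₋)(ξ,0),(0,φ)) = ((λ+1)/(λ+1+2μ))·K(ξ,(r₁−r₂)φ). -/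
/-- Hamiltonian density computation for the quasitriangular models:
`B((π₊−π₋)(ξ,0),(ξ,0)) = (2/(λ+1+2μ))K(ξ,ξ)` and
`B((π₊−π₋)(ξ,0),(0,φ)) = ((λ+1)/(λ+1+2μ))K(ξ,(r₁−r₂)φ)`. -/
theorem stmt9 {V : Type*} [AddCommGroup V] [Module ℝ V] [FiniteDimensional ℝ V]
    (r₁ r₂ : Module.Dual ℝ V →ₗ[ℝ] V)
    (hr : ∀ φ ψ : Module.Dual ℝ V, ψ (r₂ φ) = φ (r₁ ψ))
    (hS : Function.Bijective (r₁ + r₂))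
    (lam μ : ℝ) (hlm : lam + 1 + 2 * μ ≠ 0)
    (πp πm : V × Module.Dual ℝ V → V × Module.Dual ℝ V)
    (hp : ∀ z, πp z ∈ LinearMap.range
      ((((lam + 1) • r₂ + μ • (r₁ + r₂)).prod LinearMap.id)))
    (hm : ∀ z, πm z ∈ LinearMap.range
      (((-((lam + 1) • r₁) - μ • (r₁ + r₂)).prod LinearMap.id)))
    (hsum : ∀ z, πp z + πm z = z) :
    let B : V × Module.Dual ℝ V → V × Module.Dual ℝ V → ℝ :=
      fun z w => z.2 w.1 + w.2 z.1
    let K : V → V → ℝ :=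
      fun η ζ => (LinearEquiv.ofBijective (r₁ + r₂) hS).symm η ζ
    ∀ (ξ : V) (φ : Module.Dual ℝ V),
      B (πp (ξ, 0) - πm (ξ, 0)) (ξ, 0) = (2 / (lam + 1 + 2 * μ)) * K ξ ξ ∧
      B (πp (ξ, 0) - πm (ξ, 0)) (0, φ) =
        ((lam + 1) / (lam + 1 + 2 * μ)) * K ξ ((r₁ - r₂) φ) := by
  intro B K ξ φ
  obtain ⟨ψ, hψ⟩ := hp (ξ, 0)
  obtain ⟨χ, hχ⟩ := hm (ξ, 0)
  have hsum' := hsum (ξ, 0)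
  rw [← hψ, ← hχ] at hsum'
  simp only [LinearMap.prod_apply, Function.prod, LinearMap.id_apply, Prod.mk_add_mk,
    Prod.mk.injEq] at hsum'
  obtain ⟨h1, h2⟩ := hsum'
  have hχψ : χ = -ψ := by
    have := h2
    linear_combination (norm := module) h2
  subst hχψ
  -- key : (lam+1+2μ) • (r₁+r₂) ψ = ξ
  have key : (lam + 1 + 2 * μ) • ((r₁ + r₂) ψ) = ξ := by
    rw [← h1]
    simp only [map_neg, LinearMap.add_apply, LinearMap.sub_apply, LinearMap.neg_apply,
      LinearMap.smul_apply]
    module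
  set c := lam + 1 + 2 * μ with hc
  have hKsymm : (LinearEquiv.ofBijective (r₁ + r₂) hS).symm ξ = c • ψ := by
    rw [LinearEquiv.symm_apply_eq]
    rw [← key]
    simp [LinearEquiv.ofBijective_apply]
  have hK : ∀ ζ, K ξ ζ = c * ψ ζ := by
    intro ζ
    simp only [K, hKsymm, LinearMap.smul_apply, smul_eq_mul]
  -- components of the difference
  have hd : πp (ξ, 0) - πm (ξ, 0) =
      ((lam + 1) • r₂ ψ - (lam + 1) • r₁ ψ, ψ + ψ) := by
    rw [← hψ, ← hχ]
    rw [Prod.ext_iff]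
    constructor
    · simp only [LinearMap.prod_apply, Function.prod, LinearMap.id_apply, map_neg,
        Prod.fst_sub, Prod.fst_neg, LinearMap.add_apply, LinearMap.sub_apply, LinearMap.neg_apply,
        LinearMap.smul_apply]
      module
    · simp only [LinearMap.prod_apply, Function.prod, LinearMap.id_apply, Prod.snd_sub]
      abel
  constructor
  · rw [hd]
    simp only [B, map_zero, add_zero, LinearMap.zero_apply, LinearMap.add_apply]
    rw [hK ξ]
    field_simp
    ring
  · rw [hd]
    simp only [B, map_zero, zero_add, map_add, map_sub, map_smul, smul_eq_mul]
    rw [hK ((r₁ - r₂) φ)]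
    have e1 : φ (r₂ ψ) = ψ (r₁ φ) := hr ψ φ
    have e2 : ψ (r₂ φ) = φ (r₁ ψ) := hr φ ψ
    simp only [LinearMap.sub_apply, map_sub]
    field_simp
    linear_combination (lam + 1) * e1 + (lam + 1) * e2
end

section
/- Let V be a finite-dimensional real vector space, r₁, r₂ : V* → V linear with ψ(r₂(φ)) = φ(r₁(ψ)) for all φ, ψ ∈ V*, S = r₁ + r₂ bijective, and λ, μ ∈ ℝ with λ + 1 + 2μ ≠ 0. Set E' = (λ+1)r₂ + μS, T' = −(λ+1)r₁ − μS, 𝓔₊ = {(E'φ, φ)}, 𝓔₋ = {(T'φ, φ)}, π₊, π₋ the projections onto 𝓔₊ along 𝓔₋ and onto 𝓔₋ along 𝓔₊, B((ξ,φ),(η,ψ)) = φ(η) + ψ(ξ), and K(η,ζ) = (S⁻¹η)(ζ). Then for every φ ∈ V*: B((π₊−π₋)(0,φ),(0,φ)) = (2/(λ+1+2μ))·K(T'φ, T'φ), and moreover K(T'φ, T'φ) = ((λ+1)²/4)·K((r₁−r₂)φ,(r₁−r₂)φ) + ((λ+1+2μ)²/4)·φ(Sφ). -/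
/-- Hamiltonian density computation for the quasitriangular models:
`B((π₊−π₋)(0,φ),(0,φ)) = (2/(λ+1+2μ))K(T'φ,T'φ)` together with
`K(T'φ,T'φ) = ((λ+1)²/4)K((r₁−r₂)φ,(r₁−r₂)φ) + ((λ+1+2μ)²/4)φ(Sφ)`. -/
theorem stmt10 {V : Type*} [AddCommGroup V] [Module ℝ V] [FiniteDimensional ℝ V]
    (r₁ r₂ : Module.Dual ℝ V →ₗ[ℝ] V)
    (hr : ∀ φ ψ : Module.Dual ℝ V, ψ (r₂ φ) = φ (r₁ ψ))
    (hS : Function.Bijective (r₁ + r₂))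
    (lam μ : ℝ) (hlm : lam + 1 + 2 * μ ≠ 0)
    (πp πm : V × Module.Dual ℝ V → V × Module.Dual ℝ V)
    (hp : ∀ z, πp z ∈ LinearMap.range
      ((((lam + 1) • r₂ + μ • (r₁ + r₂)).prod LinearMap.id)))
    (hm : ∀ z, πm z ∈ LinearMap.range
      (((-((lam + 1) • r₁) - μ • (r₁ + r₂)).prod LinearMap.id)))
    (hsum : ∀ z, πp z + πm z = z) :
    let S : Module.Dual ℝ V →ₗ[ℝ] V := r₁ + r₂
    let T' : Module.Dual ℝ V →ₗ[ℝ] V := -((lam + 1) • r₁) - μ • S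
    let B : V × Module.Dual ℝ V → V × Module.Dual ℝ V → ℝ :=
      fun z w => z.2 w.1 + w.2 z.1
    let K : V → V → ℝ :=
      fun η ζ => (LinearEquiv.ofBijective (r₁ + r₂) hS).symm η ζ
    ∀ φ : Module.Dual ℝ V,
      B (πp (0, φ) - πm (0, φ)) (0, φ) =
        (2 / (lam + 1 + 2 * μ)) * K (T' φ) (T' φ) ∧
      K (T' φ) (T' φ) =
        ((lam + 1) ^ 2 / 4) * K ((r₁ - r₂) φ) ((r₁ - r₂) φ)
          + ((lam + 1 + 2 * μ) ^ 2 / 4) * φ (S φ) := by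
  intro S T' B K φ
  set eS := LinearEquiv.ofBijective (r₁ + r₂) hS with heS
  -- basic facts about eS
  have hes : ∀ x : Module.Dual ℝ V, eS.symm ((r₁ + r₂) x) = x := by
    intro x
    have h : (r₁ + r₂) x = eS x := rfl
    rw [h, eS.symm_apply_apply]
  have hse : ∀ v : V, (r₁ + r₂) (eS.symm v) = v := fun v => eS.apply_symm_apply v
  -- symmetry of S
  have hSsym : ∀ φ' ψ' : Module.Dual ℝ V,
      ψ' (r₁ φ') + ψ' (r₂ φ') = φ' (r₁ ψ') + φ' (r₂ ψ') := by
    intro φ' ψ'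
    rw [hr φ' ψ', ← hr ψ' φ']
    ring
  -- the hypotheses unpacked at (0, φ)
  obtain ⟨p, hp'⟩ := hp (0, φ)
  obtain ⟨q, hq'⟩ := hm (0, φ)
  have hsum' := hsum (0, φ)
  rw [← hp', ← hq'] at hsum'
  simp only [LinearMap.prod_apply, Function.prod, LinearMap.id_apply, Prod.mk_add_mk,
    Prod.mk.injEq] at hsum'
  obtain ⟨h1, h2⟩ := hsum'
  -- h1 : E' p + T' q = 0, h2 : p + q = φ
  have hq2 : q = φ - p := by rw [← h2]; abel
  have hT'φ : T' φ = -((lam + 1 + 2 * μ) • ((r₁ + r₂) p)) := by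
    have h1' := h1
    rw [hq2] at h1'
    simp only [LinearMap.add_apply, LinearMap.sub_apply, LinearMap.neg_apply,
      LinearMap.smul_apply, map_sub] at h1'
    show (-((lam + 1) • r₁) - μ • (r₁ + r₂)) φ = _
    simp only [LinearMap.add_apply, LinearMap.sub_apply, LinearMap.neg_apply,
      LinearMap.smul_apply]
    linear_combination (norm := module) h1'
  have hsymT : eS.symm (T' φ) = -((lam + 1 + 2 * μ) • p) := by
    rw [hT'φ, map_neg, map_smul, hes]
  -- value of K (T' φ) (T' φ)
  have hKval : K (T' φ) (T' φ) = (lam + 1 + 2 * μ) ^ 2 * p ((r₁ + r₂) p) := by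
    show eS.symm (T' φ) (T' φ) = _
    rw [hsymT, hT'φ]
    simp only [LinearMap.neg_apply, LinearMap.smul_apply, map_neg, map_smul,
      smul_eq_mul, neg_neg]
    ring
  -- T' φ evaluated on p
  have hpT : p (T' φ) = -((lam + 1 + 2 * μ) * p ((r₁ + r₂) p)) := by
    rw [hT'φ]
    simp only [map_neg, map_smul, LinearMap.add_apply, map_add, smul_eq_mul]
  -- adjoint relation: φ (E' p) = - p (T' φ)
  have hadj : φ (((lam + 1) • r₂ + μ • (r₁ + r₂)) p) = - p (T' φ) := by
    show _ = - p ((-((lam + 1) • r₁) - μ • (r₁ + r₂)) φ)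
    simp only [LinearMap.add_apply, LinearMap.sub_apply, LinearMap.neg_apply,
      LinearMap.smul_apply, map_add, map_neg, map_sub, map_smul, smul_eq_mul]
    linear_combination (lam + 1) * hr p φ + μ * hSsym p φ
  constructor
  · -- first identity
    have hB : B (πp (0, φ) - πm (0, φ)) (0, φ)
        = φ (((lam + 1) • r₂ + μ • (r₁ + r₂)) p)
          - φ ((-((lam + 1) • r₁) - μ • (r₁ + r₂)) q) := by
      rw [← hp', ← hq']
      simp only [B, LinearMap.prod_apply, Function.prod, LinearMap.id_apply, Prod.fst_sub,
        Prod.snd_sub, map_sub]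
      simp
    have hzero : φ (((lam + 1) • r₂ + μ • (r₁ + r₂)) p)
        + φ ((-((lam + 1) • r₁) - μ • (r₁ + r₂)) q) = 0 := by
      rw [← map_add, h1, map_zero]
    rw [hB, hKval]
    have e1 : φ (((lam + 1) • r₂ + μ • (r₁ + r₂)) p)
        = (lam + 1 + 2 * μ) * p ((r₁ + r₂) p) := by
      rw [hadj, hpT]; ring
    have e2 : φ ((-((lam + 1) • r₁) - μ • (r₁ + r₂)) q)
        = -((lam + 1 + 2 * μ) * p ((r₁ + r₂) p)) := by
      linarith [hzero, e1]
    rw [e1, e2]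
    field_simp
    ring
  · -- second identity
    set α : Module.Dual ℝ V := (-((lam + 1 + 2 * μ) / 2)) • φ with hα
    set v : V := (-((lam + 1) / 2)) • ((r₁ - r₂) φ) with hv
    have hdecomp : T' φ = (r₁ + r₂) α + v := by
      show (-((lam + 1) • r₁) - μ • (r₁ + r₂)) φ = _
      rw [hα, hv]
      simp only [LinearMap.add_apply, LinearMap.sub_apply, LinearMap.neg_apply,
        LinearMap.smul_apply, map_smul, map_sub, smul_sub, smul_add]
      module
    have hsymv : eS.symm (T' φ) = α + eS.symm v := by
      rw [hdecomp, map_add, hes]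
    have hcross : eS.symm v (r₁ α) + eS.symm v (r₂ α) = α v := by
      rw [hSsym α (eS.symm v), ← map_add]
      have h := hse v
      rw [LinearMap.add_apply] at h
      rw [h]
    have hαv : α v = 0 := by
      rw [hα, hv]
      simp only [LinearMap.smul_apply, map_smul, LinearMap.sub_apply, map_sub,
        smul_eq_mul]
      have := hr φ φ
      linear_combination (-((lam + 1 + 2 * μ) * (lam + 1) / 4)) * this
    show eS.symm (T' φ) (T' φ)
        = ((lam + 1) ^ 2 / 4) * (eS.symm ((r₁ - r₂) φ)) ((r₁ - r₂) φ)
          + ((lam + 1 + 2 * μ) ^ 2 / 4) * φ ((r₁ + r₂) φ)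
    rw [hsymv, hdecomp]
    simp only [LinearMap.add_apply, map_add]
    have hv1 : eS.symm v v = ((lam + 1) ^ 2 / 4)
        * (eS.symm ((r₁ - r₂) φ)) ((r₁ - r₂) φ) := by
      rw [hv]
      simp only [map_smul, LinearMap.smul_apply, smul_eq_mul]
      ring
    have hα1 : α (r₁ α) + α (r₂ α)
        = ((lam + 1 + 2 * μ) ^ 2 / 4) * (φ (r₁ φ) + φ (r₂ φ)) := by
      rw [hα]
      simp only [map_smul, LinearMap.smul_apply, smul_eq_mul]
      ring
    linear_combination hcross + 2 * hαv + hv1 + hα1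
end

section
/- Let a, b : ℝ → ℂ, ρ : ℝ → ℂ and p₃ : ℝ → ℝ be differentiable functions satisfying the system a' = −i|a|²(a·p₃ + b·ρ) and b' = i·b·p₃ − (i/2)(1 + |a|²)·a·conj(ρ) − (i/2)·ρ·conj(a)·b². Then (|a|² + |b|²)' = (|a|² + |b|² − 1)·Im(conj(a)·b·ρ) at every point. In particular, the condition |a|² + |b|² = 1 is preserved by the flow. -/
lemma normSq_deriv {f : ℝ → ℂ} {d : ℂ} {t : ℝ} (hf : HasDerivAt f d t) :
    HasDerivAt (fun t => Complex.normSq (f t)) (2 * (starRingEnd ℂ (f t) * d).re) t := by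
  have hre : HasDerivAt (fun t => (f t).re) d.re t :=
    (Complex.reCLM.hasFDerivAt.comp_hasDerivAt t hf)
  have him : HasDerivAt (fun t => (f t).im) d.im t :=
    (Complex.imCLM.hasFDerivAt.comp_hasDerivAt t hf)
  have := (hre.mul hre).add (him.mul him)
  have h2 : HasDerivAt (fun t => Complex.normSq (f t))
      ((f t).re * d.re + d.re * (f t).re + ((f t).im * d.im + d.im * (f t).im)) t := by
    simp only [Complex.normSq_apply]
    exact this.congr_deriv (by ring)
  convert h2 using 1
  simp only [Complex.mul_re, Complex.conj_re, Complex.conj_im]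
  ring

/-- For the point-particle equations of motion on `SU₂`, the quantity
`|a|² + |b|²` evolves by `(|a|²+|b|²)' = (|a|²+|b|²−1)·Im(ā·b·ρ)`; in
particular the constraint `|a|²+|b|² = 1` is preserved. -/
theorem stmt14 (a b ρ : ℝ → ℂ) (p₃ : ℝ → ℝ)
    (hρ : Differentiable ℝ ρ) (hp₃ : Differentiable ℝ p₃)
    (ha : ∀ t, HasDerivAt a
      (-Complex.I * (Complex.normSq (a t) : ℂ) * (a t * (p₃ t : ℂ) + b t * ρ t)) t)
    (hb : ∀ t, HasDerivAt b
      (Complex.I * b t * (p₃ t : ℂ)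
        - (Complex.I / 2) * (1 + (Complex.normSq (a t) : ℂ)) * a t * starRingEnd ℂ (ρ t)
        - (Complex.I / 2) * ρ t * starRingEnd ℂ (a t) * b t ^ 2) t) :
    ∀ t, HasDerivAt (fun t => Complex.normSq (a t) + Complex.normSq (b t))
      ((Complex.normSq (a t) + Complex.normSq (b t) - 1) *
        (starRingEnd ℂ (a t) * b t * ρ t).im) t := by
  intro t
  have h := (normSq_deriv (ha t)).add (normSq_deriv (hb t))
  refine h.congr_deriv ?_
  obtain ⟨x, y⟩ := a t
  obtain ⟨u, v⟩ := b t
  obtain ⟨r, s⟩ := ρ t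
  simp [pow_two, Complex.normSq_apply, Complex.mul_re, Complex.mul_im, Complex.ext_iff,
    Complex.div_re, Complex.div_im, Complex.normSq]
  ring
end

section
/- Let H = [[1,0],[0,−1]], X₊ = [[0,1],[0,0]], X₋ = [[0,0],[1,0]] in the space of real 2 × 2 matrices, and let P be the linear map on the span of {H, X₊, X₋} determined by P(H) = H/2, P(X₊) = X₊, P(X₋) = 0. Fix ω, x₀ ∈ ℝ and an invertible 2 × 2 real matrix u₀, and define ξ(t) = (ω/2)H + e^{−ωt}x₀·X₊ and u(t) = u₀·exp(−(ωt/2)H), where exp is the matrix exponential. Then for every t: (i) ξ'(t) = 2·[P(ξ(t)), ξ(t)] (matrix commutator), and (ii) u(t) is invertible with u(t)⁻¹·u'(t) = 2·(P(ξ(t)) − ξ(t)) = −(ω/2)H. -/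
attribute [local instance] Matrix.normedAddCommGroup Matrix.normedSpace

/-!
On `ξ = a H + b X₊` the map `P` only halves the `H`-coefficient, so `sl₂`'s relation
`[H, X₊] = 2 X₊` gives `2 [P ξ, ξ] = -2 a b X₊`; for `a = ω/2` and `b = e^{-ωt} x₀` this is
`b' X₊ = ξ'`. Likewise `2 (P ξ - ξ) = -a H` is constant, and `u = u₀ exp(-(ωt/2) H)` is a
translated one-parameter subgroup, whose logarithmic derivative `u⁻¹ u'` is its generator
`-(ω/2) H`.
-/

theorem commutator_smul_add_smul_of_commutator_eq {R A : Type*} [CommRing R] [Ring A]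
    [Algebra R A] {H X : A} (hHX : H * X - X * H = (2 : R) • X) (a b c d : R) :
    (a • H + b • X) * (c • H + d • X) - (c • H + d • X) * (a • H + b • X) =
      (2 * (a * d - b * c)) • X := by
  have hXH : X * H = H * X - (2 : R) • X := by rw [← hHX, sub_sub_cancel]
  simp only [add_mul, mul_add, smul_mul_smul_comm, hXH]
  module

theorem sl2_H_mul_X_sub_X_mul_H {R : Type*} [CommRing R] :
    !![(1 : R), 0; 0, -1] * !![0, 1; 0, 0] - !![0, 1; 0, 0] * !![(1 : R), 0; 0, -1] =
      (2 : R) • !![0, 1; 0, 0] := by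
  ext i j
  fin_cases i <;> fin_cases j <;> norm_num

/- `HasDerivAt` only sees the topology of the matrices, so we may borrow the Banach-algebra
structure given by the `L^∞` operator norm. -/
open scoped Matrix.Norms.Operator in
theorem Matrix.HasDerivAt.mul_exp_smul {𝕂 n : Type*} [RCLike 𝕂] [Fintype n] [DecidableEq n]
    (B A : Matrix n n 𝕂) {f : 𝕂 → 𝕂} {f' t : 𝕂} (hf : HasDerivAt f f' t) :
    HasDerivAt (fun s => B * NormedSpace.exp (f s • A))
      (f' • (B * NormedSpace.exp (f t • A) * A)) t := by
  have hexp := (hasDerivAt_exp_smul_const A (f t)).scomp t hf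
  rw [Matrix.mul_assoc, ← mul_smul_comm]
  exact hexp.const_mul B

theorem stmt17_general (ω x₀ : ℝ) (u₀ : Matrix (Fin 2) (Fin 2) ℝ) (hu₀ : IsUnit u₀)
    (H Xp : Matrix (Fin 2) (Fin 2) ℝ)
    (hH : H = !![1, 0; 0, -1]) (hXp : Xp = !![0, 1; 0, 0])
    (P : Matrix (Fin 2) (Fin 2) ℝ →ₗ[ℝ] Matrix (Fin 2) (Fin 2) ℝ)
    (hPH : P H = (1 / 2 : ℝ) • H) (hPXp : P Xp = Xp) :
    let ξ : ℝ → Matrix (Fin 2) (Fin 2) ℝ :=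
      fun t => (ω / 2) • H + (Real.exp (-(ω * t)) * x₀) • Xp
    let u : ℝ → Matrix (Fin 2) (Fin 2) ℝ :=
      fun t => u₀ * NormedSpace.exp ((-(ω * t / 2)) • H)
    ∀ t : ℝ,
      HasDerivAt ξ ((2 : ℝ) • (P (ξ t) * ξ t - ξ t * P (ξ t))) t ∧
      IsUnit (u t) ∧
      (u t)⁻¹ * deriv u t = (2 : ℝ) • (P (ξ t) - ξ t) ∧
      (2 : ℝ) • (P (ξ t) - ξ t) = (-(ω / 2)) • H := by
  intro ξ u t
  set b := Real.exp (-(ω * t)) * x₀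
  have hξt : ξ t = (ω / 2) • H + b • Xp := rfl
  have hPξ : P (ξ t) = (ω / 2 / 2) • H + b • Xp := by
    rw [hξt, map_add, map_smul, map_smul, hPH, hPXp, smul_smul, mul_one_div]
  have hb : HasDerivAt (fun s => Real.exp (-(ω * s)) * x₀) (-ω * b) t :=
    (((Real.hasDerivAt_exp _).comp t ((hasDerivAt_id' t).const_mul ω).neg).mul_const x₀).congr_deriv
      (by simp only [b, Pi.neg_apply]; ring)
  have hξ' : HasDerivAt ξ ((-ω * b) • Xp) t := (hb.smul_const Xp).const_add ((ω / 2) • H)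
  have hu' : HasDerivAt u ((-(ω / 2)) • (u t * H)) t :=
    Matrix.HasDerivAt.mul_exp_smul u₀ H <|
      (((hasDerivAt_id' t).const_mul ω).div_const 2).neg.congr_deriv (by ring)
  have hunit : IsUnit (u t) := hu₀.mul (Matrix.isUnit_exp _)
  have hPξ_sub : (2 : ℝ) • (P (ξ t) - ξ t) = (-(ω / 2)) • H := by
    rw [hPξ, hξt]; module
  refine ⟨?_, hunit, ?_, hPξ_sub⟩
  · have hHXp : H * Xp - Xp * H = (2 : ℝ) • Xp := hH ▸ hXp ▸ sl2_H_mul_X_sub_X_mul_H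
    rw [hPξ, hξt, commutator_smul_add_smul_of_commutator_eq hHXp]
    convert hξ' using 1
    rw [smul_smul]; congr 1; ring
  · have hderiv : deriv u t = (-(ω / 2)) • (u t * H) := hu'.deriv
    rw [hPξ_sub, hderiv, Matrix.mul_smul,
      Matrix.nonsing_inv_mul_cancel_left _ _ ((Matrix.isUnit_iff_isUnit_det _).1 hunit)]

/-- Explicit solution of the point-particle pure-quasitriangular model on
`SL₂(ℝ)`: with `ξ(t) = (ω/2)H + e^{−ωt}x₀X₊` and `u(t) = u₀·exp(−(ωt/2)H)`,
one has `ξ' = 2[P ξ, ξ]` and `u⁻¹u' = 2(P ξ − ξ) = −(ω/2)H`, where `P` is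
linear with `P H = H/2`, `P X₊ = X₊`, `P X₋ = 0`. -/
theorem stmt17 (ω x₀ : ℝ) (u₀ : Matrix (Fin 2) (Fin 2) ℝ) (hu₀ : IsUnit u₀)
    (H Xp Xm : Matrix (Fin 2) (Fin 2) ℝ)
    (hH : H = !![1, 0; 0, -1]) (hXp : Xp = !![0, 1; 0, 0]) (hXm : Xm = !![0, 0; 1, 0])
    (P : Matrix (Fin 2) (Fin 2) ℝ →ₗ[ℝ] Matrix (Fin 2) (Fin 2) ℝ)
    (hPH : P H = (1 / 2 : ℝ) • H) (hPXp : P Xp = Xp) (hPXm : P Xm = 0) :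
    let ξ : ℝ → Matrix (Fin 2) (Fin 2) ℝ :=
      fun t => (ω / 2) • H + (Real.exp (-(ω * t)) * x₀) • Xp
    let u : ℝ → Matrix (Fin 2) (Fin 2) ℝ :=
      fun t => u₀ * NormedSpace.exp ((-(ω * t / 2)) • H)
    ∀ t : ℝ,
      HasDerivAt ξ ((2 : ℝ) • (P (ξ t) * ξ t - ξ t * P (ξ t))) t ∧
      IsUnit (u t) ∧
      (u t)⁻¹ * deriv u t = (2 : ℝ) • (P (ξ t) - ξ t) ∧
      (2 : ℝ) • (P (ξ t) - ξ t) = (-(ω / 2)) • H :=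
  stmt17_general ω x₀ u₀ hu₀ H Xp hH hXp P hPH hPXp
end
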